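/- arXiv:2201.11612 — 2 statements merged into one kernel-verified Lean document; each statement's English description precedes it below -/
import Mathlib

section
/- Let Θ : [0,∞) → L(H) (H a Hilbert space) satisfy ‖Θ_t‖ ≤ C e^{-κ t} for constants C > 0, κ > 0, and let Ω solve the Volterra equation Ω_t = Θ_t + ∫_0^t Θ_{t-s} ∘ Ω_s ds. If there exists λ ∈ (0, κ) with ∫_0^∞ e^{λ s}‖Ω_s‖ ds < ∞, then sup_{t≥0} e^{λ t} ‖Ω_t‖ < ∞. -/
open MeasureTheory

/-- If `‖Θ_t‖ ≤ C e^{-κt}`, `Ω` solves the Volterra equation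
`Ω_t = Θ_t + ∫_0^t Θ_{t-s}∘Ω_s ds`, and `∫_0^∞ e^{lams}‖Ω_s‖ ds < ∞` for some
`lam ∈ (0,κ)`, then `sup_{t≥0} e^{lamt}‖Ω_t‖ < ∞`. -/
theorem volterra_exponential_decay_upgrade
    {H : Type*} [NormedAddCommGroup H] [InnerProductSpace ℝ H] [CompleteSpace H]
    (Θ Ω : ℝ → H →L[ℝ] H) (C κ lam : ℝ) (hC : 0 < C) (hκ : 0 < κ)
    (hlam : 0 < lam) (hlamκ : lam < κ)
    (hΘmeas : Measurable Θ) (hΩmeas : Measurable Ω)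
    (hΘ : ∀ t ≥ 0, ‖Θ t‖ ≤ C * Real.exp (-κ * t))
    (hVolterra : ∀ t ≥ 0,
      Ω t = Θ t + ∫ s in Set.Ioc (0:ℝ) t, (Θ (t - s)).comp (Ω s))
    (hΩint : IntegrableOn (fun s => Real.exp (lam * s) * ‖Ω s‖) (Set.Ioi (0:ℝ))) :
    ∃ M : ℝ, ∀ t ≥ 0, Real.exp (lam * t) * ‖Ω t‖ ≤ M := by
  set I : ℝ := ∫ s in Set.Ioi (0:ℝ), Real.exp (lam * s) * ‖Ω s‖ with hI
  have hInn : ∀ᵐ s ∂(volume.restrict (Set.Ioi (0:ℝ))),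
      0 ≤ Real.exp (lam * s) * ‖Ω s‖ :=
    Filter.Eventually.of_forall fun s => mul_nonneg (Real.exp_pos _).le (norm_nonneg _)
  refine ⟨C + C * I, fun t ht => ?_⟩
  -- integrability of the dominating function on Ioc 0 t
  have hIocsub : Set.Ioc (0:ℝ) t ⊆ Set.Ioi 0 := Set.Ioc_subset_Ioi_self
  have hgint : IntegrableOn (fun s => C * (Real.exp (lam * s) * ‖Ω s‖))
      (Set.Ioc (0:ℝ) t) := (hΩint.mono_set hIocsub).const_mul C
  -- key pointwise bound under the integral
  have hpt : ∀ s ∈ Set.Ioc (0:ℝ) t,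
      Real.exp (lam * t) * ‖(Θ (t - s)).comp (Ω s)‖ ≤
        C * (Real.exp (lam * s) * ‖Ω s‖) := by
    intro s hs
    have hts : 0 ≤ t - s := by linarith [hs.2]
    have h1 : ‖(Θ (t - s)).comp (Ω s)‖ ≤ C * Real.exp (-κ * (t - s)) * ‖Ω s‖ := by
      calc ‖(Θ (t - s)).comp (Ω s)‖ ≤ ‖Θ (t - s)‖ * ‖Ω s‖ :=
            ContinuousLinearMap.opNorm_comp_le _ _
        _ ≤ C * Real.exp (-κ * (t - s)) * ‖Ω s‖ :=
            mul_le_mul_of_nonneg_right (hΘ _ hts) (norm_nonneg _)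
    have h2 : Real.exp (lam * t) * (C * Real.exp (-κ * (t - s)) * ‖Ω s‖)
        = C * (Real.exp ((lam - κ) * (t - s)) * (Real.exp (lam * s) * ‖Ω s‖)) := by
      have e1 : Real.exp (lam * t) * Real.exp (-κ * (t - s))
          = Real.exp ((lam - κ) * (t - s)) * Real.exp (lam * s) := by
        rw [← Real.exp_add, ← Real.exp_add]; ring_nf
      linear_combination (C * ‖Ω s‖) * e1
    have h3 : Real.exp ((lam - κ) * (t - s)) ≤ 1 := by
      apply Real.exp_le_one_iff.mpr
      nlinarith
    calc Real.exp (lam * t) * ‖(Θ (t - s)).comp (Ω s)‖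
        ≤ Real.exp (lam * t) * (C * Real.exp (-κ * (t - s)) * ‖Ω s‖) :=
          mul_le_mul_of_nonneg_left h1 (Real.exp_pos _).le
      _ = C * (Real.exp ((lam - κ) * (t - s)) * (Real.exp (lam * s) * ‖Ω s‖)) := h2
      _ ≤ C * (1 * (Real.exp (lam * s) * ‖Ω s‖)) := by
          apply mul_le_mul_of_nonneg_left _ hC.le
          exact mul_le_mul_of_nonneg_right h3
            (mul_nonneg (Real.exp_pos _).le (norm_nonneg _))
      _ = C * (Real.exp (lam * s) * ‖Ω s‖) := by ring
  -- the integral bound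
  have hint1 : Real.exp (lam * t) *
      ‖∫ s in Set.Ioc (0:ℝ) t, (Θ (t - s)).comp (Ω s)‖ ≤ C * I := by
    calc Real.exp (lam * t) * ‖∫ s in Set.Ioc (0:ℝ) t, (Θ (t - s)).comp (Ω s)‖
        ≤ Real.exp (lam * t) *
            ∫ s in Set.Ioc (0:ℝ) t, ‖(Θ (t - s)).comp (Ω s)‖ :=
          mul_le_mul_of_nonneg_left (norm_integral_le_integral_norm _)
            (Real.exp_pos _).le
      _ = ∫ s in Set.Ioc (0:ℝ) t,
            Real.exp (lam * t) * ‖(Θ (t - s)).comp (Ω s)‖ :=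
          (integral_const_mul _ _).symm
      _ ≤ ∫ s in Set.Ioc (0:ℝ) t, C * (Real.exp (lam * s) * ‖Ω s‖) := by
          apply integral_mono_of_nonneg
          · exact Filter.Eventually.of_forall fun s =>
              mul_nonneg (Real.exp_pos _).le (norm_nonneg _)
          · exact hgint
          · refine (ae_restrict_iff' measurableSet_Ioc).mpr
              (Filter.Eventually.of_forall fun s hs => hpt s hs)
      _ = C * ∫ s in Set.Ioc (0:ℝ) t, Real.exp (lam * s) * ‖Ω s‖ :=
          integral_const_mul _ _
      _ ≤ C * I := by
          apply mul_le_mul_of_nonneg_left _ hC.le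
          exact setIntegral_mono_set hΩint hInn
            (HasSubset.Subset.eventuallyLE hIocsub)
  -- bound on the Θ term
  have hΘterm : Real.exp (lam * t) * ‖Θ t‖ ≤ C := by
    calc Real.exp (lam * t) * ‖Θ t‖
        ≤ Real.exp (lam * t) * (C * Real.exp (-κ * t)) :=
          mul_le_mul_of_nonneg_left (hΘ t ht) (Real.exp_pos _).le
      _ = C * Real.exp ((lam - κ) * t) := by
          have e2 : Real.exp (lam * t) * Real.exp (-κ * t)
              = Real.exp ((lam - κ) * t) := by
            rw [← Real.exp_add]; ring_nf
          linear_combination C * e2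
      _ ≤ C * 1 := by
          apply mul_le_mul_of_nonneg_left _ hC.le
          apply Real.exp_le_one_iff.mpr
          nlinarith
      _ = C := mul_one _
  calc Real.exp (lam * t) * ‖Ω t‖
      = Real.exp (lam * t) *
          ‖Θ t + ∫ s in Set.Ioc (0:ℝ) t, (Θ (t - s)).comp (Ω s)‖ := by
        rw [hVolterra t ht]
    _ ≤ Real.exp (lam * t) *
          (‖Θ t‖ + ‖∫ s in Set.Ioc (0:ℝ) t, (Θ (t - s)).comp (Ω s)‖) :=
        mul_le_mul_of_nonneg_left (norm_add_le _ _) (Real.exp_pos _).le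
    _ = Real.exp (lam * t) * ‖Θ t‖ + Real.exp (lam * t) *
          ‖∫ s in Set.Ioc (0:ℝ) t, (Θ (t - s)).comp (Ω s)‖ := by ring
    _ ≤ C + C * I := add_le_add hΘterm hint1
end

section
/- If Θ, Ω : [0,∞) → L(H) satisfy Ω_t = Θ_t + ∫_0^t Θ_{t-s}∘Ω_s ds = Θ_t + ∫_0^t Ω_{t-s}∘Θ_s ds, and both ∫_0^∞ e^{λ t}‖Θ_t‖dt < ∞ and ∫_0^∞ e^{λ t}‖Ω_t‖dt < ∞ for some λ > 0, then for all z ∈ ℂ with Re(z) > -λ the operator I - Θ̂(z) is invertible with inverse I + Ω̂(z), where Θ̂(z) = ∫_0^∞ e^{-zt}Θ_t dt and Ω̂(z) = ∫_0^∞ e^{-zt}Ω_t dt. -/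
open MeasureTheory
set_option maxHeartbeats 1000000
set_option synthInstance.maxHeartbeats 400000

open Set ContinuousLinearMap in
/-- Auxiliary: the Laplace transform of a half-line convolution is the composition
of the Laplace transforms. -/
private theorem laplace_conv_aux
    {H : Type*} [NormedAddCommGroup H] [NormedSpace ℂ H] [CompleteSpace H]
    (f g : ℝ → H →L[ℂ] H)
    (hf : IntegrableOn f (Set.Ioi (0:ℝ))) (hg : IntegrableOn g (Set.Ioi (0:ℝ))) :
    ∫ x in Set.Ioi (0:ℝ), ∫ t in (0:ℝ)..x, (g (x - t)).comp (f t)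
      = (∫ x in Set.Ioi (0:ℝ), g x).comp (∫ x in Set.Ioi (0:ℝ), f x) := by
  classical
  set L : (H →L[ℂ] H) →L[ℝ] (H →L[ℂ] H) →L[ℝ] (H →L[ℂ] H) :=
    (ContinuousLinearMap.restrictScalarsL ℂ (H →L[ℂ] H) (H →L[ℂ] H) ℝ ℝ).comp
      (((ContinuousLinearMap.compL ℂ H H H).flip).restrictScalars ℝ) with hL
  have hLapp : ∀ a b : H →L[ℂ] H, L a b = b.comp a := by
    intro a b
    simp [hL]
  have h := integral_posConvolution hf hg L
  calc ∫ x in Set.Ioi (0:ℝ), ∫ t in (0:ℝ)..x, (g (x - t)).comp (f t)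
      = ∫ x in Set.Ioi (0:ℝ), ∫ t in (0:ℝ)..x, L (f t) (g (x - t)) := by
        simp_rw [hLapp]
    _ = L (∫ x in Set.Ioi (0:ℝ), f x) (∫ x in Set.Ioi (0:ℝ), g x) := h
    _ = (∫ x in Set.Ioi (0:ℝ), g x).comp (∫ x in Set.Ioi (0:ℝ), f x) := hLapp _ _

/-- If `Ω` is the resolvent of `Θ` (both Volterra identities hold) and both
`e^{λt}‖Θ_t‖`, `e^{λt}‖Ω_t‖` are integrable on `(0,∞)`, then for every `z` with
`Re z > -λ`, `I - Θ̂(z)` is invertible with inverse `I + Ω̂(z)`. -/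
theorem laplace_resolvent_inverse
    {H : Type*} [NormedAddCommGroup H] [NormedSpace ℂ H] [CompleteSpace H]
    (Θ Ω : ℝ → H →L[ℂ] H) (lam : ℝ) (hlam : 0 < lam)
    (hΘmeas : Continuous Θ) (hΩmeas : Continuous Ω)
    (hVolterra1 : ∀ t ≥ 0,
      Ω t = Θ t + ∫ s in Set.Ioc (0:ℝ) t, (Θ (t - s)).comp (Ω s))
    (hVolterra2 : ∀ t ≥ 0,
      Ω t = Θ t + ∫ s in Set.Ioc (0:ℝ) t, (Ω (t - s)).comp (Θ s))
    (hΘint : IntegrableOn (fun t => Real.exp (lam * t) * ‖Θ t‖) (Set.Ioi (0:ℝ)))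
    (hΩint : IntegrableOn (fun t => Real.exp (lam * t) * ‖Ω t‖) (Set.Ioi (0:ℝ))) :
    ∀ z : ℂ, -lam < z.re →
      ((1 : H →L[ℂ] H) - ∫ t in Set.Ioi (0:ℝ), Complex.exp (-z * t) • Θ t)
          * ((1 : H →L[ℂ] H) + ∫ t in Set.Ioi (0:ℝ), Complex.exp (-z * t) • Ω t) = 1
      ∧ ((1 : H →L[ℂ] H) + ∫ t in Set.Ioi (0:ℝ), Complex.exp (-z * t) • Ω t)
          * ((1 : H →L[ℂ] H) - ∫ t in Set.Ioi (0:ℝ), Complex.exp (-z * t) • Θ t) = 1 := by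
  intro z hz
  -- integrability of the Laplace integrands
  have hbound : ∀ (Φ : ℝ → H →L[ℂ] H), Continuous Φ →
      IntegrableOn (fun t => Real.exp (lam * t) * ‖Φ t‖) (Set.Ioi (0:ℝ)) →
      IntegrableOn (fun t : ℝ => Complex.exp (-z * t) • Φ t) (Set.Ioi (0:ℝ)) := by
    intro Φ hc hint
    refine Integrable.mono' hint ?_ ?_
    · haveI : SecondCountableTopologyEither ℝ (H →L[ℂ] H) :=
        secondCountableTopologyEither_of_left ℝ _
      exact ((Complex.continuous_exp.comp (by continuity)).smul hc).aestronglyMeasurable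
    · filter_upwards [self_mem_ae_restrict measurableSet_Ioi] with t ht
      have ht' : (0:ℝ) ≤ t := le_of_lt ht
      have h0 : ‖Complex.exp (-z * (t:ℂ)) • Φ t‖ = ‖Complex.exp (-z * (t:ℂ))‖ * ‖Φ t‖ :=
        norm_smul (Complex.exp (-z * (t:ℂ))) (Φ t)
      rw [h0]
      have h1 : ‖Complex.exp (-z * (t:ℂ))‖ = Real.exp ((-z * (t:ℂ)).re) := Complex.norm_exp _
      rw [h1]
      have h2 : (-z * (t:ℂ)).re = -z.re * t := by simp [Complex.mul_re]
      rw [h2]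
      refine mul_le_mul_of_nonneg_right ?_ (norm_nonneg _)
      exact Real.exp_le_exp.2 (mul_le_mul_of_nonneg_right (by linarith) ht')
  have hFint := hbound Θ hΘmeas hΘint
  have hGint := hbound Ω hΩmeas hΩint
  set That := ∫ t in Set.Ioi (0:ℝ), Complex.exp (-z * t) • Θ t with hThat
  set Ohat := ∫ t in Set.Ioi (0:ℝ), Complex.exp (-z * t) • Ω t with hOhat
  -- the combined exponential
  have hexp : ∀ x t : ℝ, Complex.exp (-z * (↑(x - t))) * Complex.exp (-z * t)
      = Complex.exp (-z * x) := by
    intro x t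
    rw [← Complex.exp_add]
    congr 1
    push_cast
    ring
  -- the key convolution identity, abstracted over the two Volterra equations
  have key : ∀ (A B : ℝ → H →L[ℂ] H),
      IntegrableOn (fun t : ℝ => Complex.exp (-z * t) • A t) (Set.Ioi (0:ℝ)) →
      IntegrableOn (fun t : ℝ => Complex.exp (-z * t) • B t) (Set.Ioi (0:ℝ)) →
      (∀ t ≥ (0:ℝ), Ω t = Θ t + ∫ s in Set.Ioc (0:ℝ) t, (B (t - s)).comp (A s)) →
      (∫ t in Set.Ioi (0:ℝ), Complex.exp (-z * t) • B t).comp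
          (∫ t in Set.Ioi (0:ℝ), Complex.exp (-z * t) • A t) = Ohat - That := by
    intro A B hA hB hV
    have h := laplace_conv_aux (fun t : ℝ => Complex.exp (-z * t) • A t)
      (fun t : ℝ => Complex.exp (-z * t) • B t) hA hB
    rw [← h]
    have hinner : ∀ x ∈ Set.Ioi (0:ℝ),
        (∫ t in (0:ℝ)..x, (Complex.exp (-z * (↑(x - t))) • B (x - t)).comp
          (Complex.exp (-z * t) • A t))
        = Complex.exp (-z * x) • (Ω x - Θ x) := by
      intro x hx
      have hx0 : (0:ℝ) ≤ x := le_of_lt hx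
      have e1 : ∀ t : ℝ, (Complex.exp (-z * (↑(x - t))) • B (x - t)).comp
          (Complex.exp (-z * t) • A t)
          = Complex.exp (-z * x) • ((B (x - t)).comp (A t)) := by
        intro t
        rw [ContinuousLinearMap.smul_comp, ContinuousLinearMap.comp_smul, smul_smul, hexp]
      simp_rw [e1]
      rw [intervalIntegral.integral_smul, intervalIntegral.integral_of_le hx0]
      congr 1
      have := hV x hx0
      rw [this]
      abel
    calc (∫ x in Set.Ioi (0:ℝ), ∫ t in (0:ℝ)..x,
          (Complex.exp (-z * (↑(x - t))) • B (x - t)).comp (Complex.exp (-z * t) • A t))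
        = ∫ x in Set.Ioi (0:ℝ), Complex.exp (-z * x) • (Ω x - Θ x) :=
          setIntegral_congr_fun measurableSet_Ioi hinner
      _ = ∫ x in Set.Ioi (0:ℝ),
            (Complex.exp (-z * x) • Ω x - Complex.exp (-z * x) • Θ x) := by
          simp_rw [smul_sub]
      _ = Ohat - That := integral_sub hGint hFint
  have hconv1 : That * Ohat = Ohat - That := key Ω Θ hGint hFint hVolterra1
  have hconv2 : Ohat * That = Ohat - That := key Θ Ω hFint hGint hVolterra2
  constructor
  · have : (1 - That) * (1 + Ohat) = 1 + Ohat - That - That * Ohat := by noncomm_ring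
    rw [this, hconv1]; abel
  · have : (1 + Ohat) * (1 - That) = 1 + Ohat - That - Ohat * That := by noncomm_ring
    rw [this, hconv2]; abel
end
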